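/- Let b₀ > 0 and consider the nonlinear integro-differential initial value problem ∂ₜb(t) = 64 b(t) ∫₀ᵗ b(τ)² dτ with b(0) = b₀. Then b(t) = b₀ √(tan²(8b₀t) + 1) solves this problem on [0, π/(16b₀)), and b(t) → ∞ as t ↑ π/(16b₀). Moreover, ω(t) := −16∫₀ᵗ b(τ)² dτ = −2b₀ tan(8b₀t) also diverges (to −∞) as t ↑ π/(16b₀). -/

import Mathlib

open Filter

/-- Blow-up solution `b(t) = b₀√(tan²(8b₀t)+1)`. -/
noncomputable def b6 (c : ℝ) (t : ℝ) : ℝ := c * Real.sqrt (Real.tan (8 * c * t) ^ 2 + 1)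

/-- `ω(t) = −2b₀ tan(8b₀t)`. -/
noncomputable def w6 (c : ℝ) (t : ℝ) : ℝ := -2 * c * Real.tan (8 * c * t)

/-!
While `8b₀t` stays in `(-π/2, π/2)` the cosine is positive, so `b(t) = b₀ / cos(8b₀t)` and
`b² = b₀² / cos²(8b₀t)` is the derivative of `(b₀/8) tan(8b₀t)`; this computes the integral, and
the equation reduces to `sec' = tan · sec`. Blow-up follows from `b(t) ≥ b₀ tan(8b₀t)` and
`tan → ∞` at `π/2` from the left.
-/

open Real Set Topology

lemma sqrt_tan_sq_add_one_of_cos_pos {x : ℝ} (hx : 0 < cos x) : √(tan x ^ 2 + 1) = (cos x)⁻¹ := by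
  rw [← inv_sqrt_one_add_tan_sq hx, inv_inv, add_comm]

lemma hasDerivAt_tan_const_mul {k t : ℝ} (h : cos (k * t) ≠ 0) :
    HasDerivAt (fun s => tan (k * s)) (k / cos (k * t) ^ 2) t := by
  refine ((hasDerivAt_tan h).comp t ((hasDerivAt_id' t).const_mul k)).congr_deriv ?_
  field_simp

lemma hasDerivAt_inv_cos_const_mul {k t : ℝ} (h : cos (k * t) ≠ 0) :
    HasDerivAt (fun s => (cos (k * s))⁻¹) (k * tan (k * t) / cos (k * t)) t := by
  refine ((((hasDerivAt_id' t).const_mul k).cos).inv h).congr_deriv ?_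
  rw [tan_eq_sin_div_cos]
  field_simp

section Blowup

variable {c t : ℝ}

lemma cos_eight_mul_pos (hc : 0 < c) (ht : t ∈ Ioo (-(π / (16 * c))) (π / (16 * c))) :
    0 < cos (8 * c * t) := by
  apply Real.cos_pos_of_mem_Ioo
  obtain ⟨h₁, h₂⟩ := ht
  rw [neg_lt, lt_div_iff₀ (by positivity)] at h₁
  rw [lt_div_iff₀ (by positivity)] at h₂
  constructor <;> nlinarith

lemma b6_eq_mul_inv_cos (h : 0 < cos (8 * c * t)) : b6 c t = c * (cos (8 * c * t))⁻¹ := by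
  rw [b6, sqrt_tan_sq_add_one_of_cos_pos h]

lemma hasDerivAt_b6 (hc : 0 < c) (ht : t ∈ Ioo (-(π / (16 * c))) (π / (16 * c))) :
    HasDerivAt (b6 c) (8 * c ^ 2 * tan (8 * c * t) / cos (8 * c * t)) t := by
  have hb : (fun s => c * (cos (8 * c * s))⁻¹) =ᶠ[𝓝 t] b6 c :=
    eventually_of_mem (isOpen_Ioo.mem_nhds ht) fun s hs =>
      (b6_eq_mul_inv_cos (cos_eight_mul_pos hc hs)).symm
  refine (((hasDerivAt_inv_cos_const_mul (cos_eight_mul_pos hc ht).ne').const_mul c).congr_of_eventuallyEq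
    hb.symm).congr_deriv ?_
  ring

lemma hasDerivAt_mul_tan_eq_b6_sq (hc : 0 < c) (ht : t ∈ Ioo (-(π / (16 * c))) (π / (16 * c))) :
    HasDerivAt (fun s => c / 8 * tan (8 * c * s)) (b6 c t ^ 2) t := by
  have hcos := cos_eight_mul_pos hc ht
  refine ((hasDerivAt_tan_const_mul hcos.ne').const_mul (c / 8)).congr_deriv ?_
  rw [b6_eq_mul_inv_cos hcos]
  field_simp

lemma integral_b6_sq (hc : 0 < c) (ht : t ∈ Ioo (-(π / (16 * c))) (π / (16 * c))) :
    ∫ τ in (0 : ℝ)..t, b6 c τ ^ 2 = c / 8 * tan (8 * c * t) := by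
  have hT : 0 < π / (16 * c) := by positivity
  have hsub : uIcc 0 t ⊆ Ioo (-(π / (16 * c))) (π / (16 * c)) :=
    ordConnected_Ioo.uIcc_subset ⟨by linarith, hT⟩ ht
  have hcont : ContinuousOn (fun τ => b6 c τ ^ 2) (uIcc 0 t) := fun τ hτ =>
    ((hasDerivAt_b6 hc (hsub hτ)).continuousAt.pow 2).continuousWithinAt
  rw [intervalIntegral.integral_eq_sub_of_hasDerivAt
    (fun τ hτ => hasDerivAt_mul_tan_eq_b6_sq hc (hsub hτ)) hcont.intervalIntegrable]
  simp

lemma mul_tan_le_b6 (hc : 0 ≤ c) : c * tan (8 * c * t) ≤ b6 c t := by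
  refine mul_le_mul_of_nonneg_left ?_ hc
  calc tan (8 * c * t) ≤ |tan (8 * c * t)| := le_abs_self _
    _ = √(tan (8 * c * t) ^ 2) := (sqrt_sq_eq_abs _).symm
    _ ≤ √(tan (8 * c * t) ^ 2 + 1) := sqrt_le_sqrt (by linarith)

lemma tendsto_tan_eight_mul_nhdsLT (hc : 0 < c) :
    Tendsto (fun t => tan (8 * c * t)) (𝓝[<] (π / (16 * c))) atTop := by
  have hT : 8 * c * (π / (16 * c)) = π / 2 := by field_simp; ring
  have hmul : Tendsto (fun t => 8 * c * t) (𝓝[<] (π / (16 * c))) (𝓝[<] (π / 2)) := by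
    rw [← hT]
    exact (continuous_const_mul (8 * c)).continuousWithinAt.tendsto_nhdsWithin
      fun s (hs : s < _) => mul_lt_mul_of_pos_left hs (by positivity : (0 : ℝ) < 8 * c)
  exact tendsto_tan_pi_div_two.comp hmul

end Blowup

/-- Blow-up of the Brocket–Wegner flow: for `b₀ > 0`, `b(t) = b₀√(tan²(8b₀t)+1)` solves
`∂ₜb(t) = 64 b(t) ∫₀ᵗ b(τ)² dτ`, `b(0) = b₀`, on `[0, π/(16b₀))`, with
`ω(t) := −16∫₀ᵗ b(τ)²dτ = −2b₀tan(8b₀t)`, and `b(t) → ∞`, `ω(t) → −∞` as `t ↑ π/(16b₀)`. -/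
theorem stmt_6 (c : ℝ) (hc : 0 < c) :
    b6 c 0 = c ∧
    (∀ t ∈ Set.Ico (0 : ℝ) (Real.pi / (16 * c)),
      HasDerivAt (b6 c) (64 * b6 c t * ∫ τ in (0 : ℝ)..t, (b6 c τ) ^ 2) t ∧
        w6 c t = -16 * ∫ τ in (0 : ℝ)..t, (b6 c τ) ^ 2) ∧
    Tendsto (b6 c)
      (nhdsWithin (Real.pi / (16 * c)) (Set.Iio (Real.pi / (16 * c)))) atTop ∧
    Tendsto (w6 c)
      (nhdsWithin (Real.pi / (16 * c)) (Set.Iio (Real.pi / (16 * c)))) atBot := by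
  have htan := tendsto_tan_eight_mul_nhdsLT hc
  refine ⟨by simp [b6], fun t ht => ?_, ?_, ?_⟩
  · have ht' : t ∈ Ioo (-(π / (16 * c))) (π / (16 * c)) :=
      ⟨by linarith [ht.1, show 0 < π / (16 * c) by positivity], ht.2⟩
    rw [integral_b6_sq hc ht']
    refine ⟨?_, by rw [w6]; ring⟩
    convert hasDerivAt_b6 hc ht' using 1
    rw [b6_eq_mul_inv_cos (cos_eight_mul_pos hc ht')]
    ring
  · exact tendsto_atTop_mono (fun t => mul_tan_le_b6 hc.le) (htan.const_mul_atTop hc)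
  · exact htan.const_mul_atTop_of_neg (by linarith)
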